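/- arXiv:math/0307341 — 3 statements merged into one kernel-verified Lean document; each statement's English description precedes it below -/
import Mathlib

section
/- For every positive integer g and every positive integer n, there exist n pairwise distinct odd primes p_1, …, p_n and an odd positive integer α such that p_i ≡ 1 (mod 2g) for every i, the product p_1⋯p_n divides 2gα + 1, and the n integers (2gα+1)/p_1, …, (2gα+1)/p_n are pairwise distinct. -/
/-!
Dirichlet's theorem supplies `n` distinct primes `pᵢ ≡ 1 (mod 2g)`, whose product is then
`P = 2ga + 1`. If `a` is even, replacing it by `a + P = (2g + 1)a + 1` makes it odd while keeping
`P ∣ 2gα + 1`, since `2g(a + P) + 1 = (2g + 1) P`. Finally the cofactors `(2gα + 1)/pᵢ`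
determine the `pᵢ`, so they are pairwise distinct.
-/

open Function

theorem Nat.odd_of_modEq_one_of_two_dvd {m p : ℕ} (hm : 2 ∣ m) (hp : p ≡ 1 [MOD m]) :
    Odd p :=
  Nat.odd_iff.mpr (Nat.ModEq.of_dvd hm hp)

theorem Nat.exists_injective_prime_modEq_one (ι : Type*) [Countable ι] {k : ℕ} (hk : k ≠ 0) :
    ∃ p : ι → ℕ, Injective p ∧ ∀ i, (p i).Prime ∧ p i ≡ 1 [MOD k] := by
  obtain ⟨f, hf⟩ := Countable.exists_injective_nat ι
  let e := (Nat.infinite_setOfPred_prime_modEq_one hk).natEmbedding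
  exact ⟨fun i => e (f i), fun i j h => hf (e.injective (Subtype.ext h)), fun i => (e (f i)).2⟩

theorem Nat.exists_odd_dvd_mul_add_one {k P : ℕ} (hP : P ≡ 1 [MOD k])
    (hP0 : 0 < P) : ∃ α, Odd α ∧ P ∣ k * α + 1 := by
  obtain ⟨a, hPa⟩ : k ∣ P - 1 := (Nat.modEq_iff_dvd' hP0).mp hP.symm
  replace hP : P = k * a + 1 := by omega
  by_cases ha : Odd a
  · exact ⟨a, ha, hP ▸ dvd_rfl⟩
  · refine ⟨a + P, ?_, k + 1, by rw [hP]; ring⟩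
    have hα : a + P = (k + 1) * a + 1 := by rw [hP]; ring
    rw [hα]
    exact ((Nat.not_odd_iff_even.mp ha).mul_left _).add_one

theorem Nat.injective_div_of_dvd {ι : Type*} {p : ι → ℕ} {N : ℕ} (hp : Injective p)
    (hdvd : ∀ i, p i ∣ N) (hN : N ≠ 0) : Injective fun i => N / p i := fun i j h => by
  apply hp
  rw [← Nat.div_div_self (hdvd i) hN, ← Nat.div_div_self (hdvd j) hN]
  exact congrArg (N / ·) h

theorem stmt_1_general (g n : ℕ) (hg : 0 < g) :
    ∃ (p : Fin n → ℕ) (α : ℕ),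
      (∀ i, Nat.Prime (p i)) ∧ (∀ i, Odd (p i)) ∧ Function.Injective p ∧
      (∀ i, p i ≡ 1 [MOD 2 * g]) ∧
      Odd α ∧ 0 < α ∧
      (∏ i, p i) ∣ (2 * g * α + 1) ∧
      Function.Injective (fun i => (2 * g * α + 1) / p i) := by
  obtain ⟨p, hp_inj, hp⟩ := Nat.exists_injective_prime_modEq_one (Fin n) (k := 2 * g) (by omega)
  have hprod : ∏ i, p i ≡ 1 [MOD 2 * g] := Nat.ModEq.prod_one fun i _ => (hp i).2
  obtain ⟨α, hα, hdvd⟩ := Nat.exists_odd_dvd_mul_add_one hprod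
    (Finset.prod_pos fun i _ => (hp i).1.pos)
  refine ⟨p, α, fun i => (hp i).1,
    fun i => Nat.odd_of_modEq_one_of_two_dvd (dvd_mul_right 2 g) (hp i).2, hp_inj,
    fun i => (hp i).2, hα, hα.pos, hdvd, ?_⟩
  exact Nat.injective_div_of_dvd hp_inj
    (fun i => (Finset.dvd_prod_of_mem p (Finset.mem_univ i)).trans hdvd) (by omega)

/-- For every positive integer `g` and every positive integer `n`, there exist `n`
pairwise distinct odd primes `p 0, …, p (n-1)` and an odd positive integer `α` such
that `p i ≡ 1 (mod 2g)` for every `i`, the product `p 0 ⋯ p (n-1)` divides `2gα + 1`,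
and the integers `(2gα+1)/(p i)` are pairwise distinct. -/
theorem stmt_1 (g n : ℕ) (hg : 0 < g) (hn : 0 < n) :
    ∃ (p : Fin n → ℕ) (α : ℕ),
      (∀ i, Nat.Prime (p i)) ∧ (∀ i, Odd (p i)) ∧ Function.Injective p ∧
      (∀ i, p i ≡ 1 [MOD 2 * g]) ∧
      Odd α ∧ 0 < α ∧
      (∏ i, p i) ∣ (2 * g * α + 1) ∧
      Function.Injective (fun i => (2 * g * α + 1) / p i) :=
  stmt_1_general g n hg
end

section
/- Let g, α, r be integers with g ≥ 1, α ≥ 1 and −α ≤ r ≤ α, and set (in ℚ) D = 2g + (r−α)/(2α), K = 2g − 1 − 1/α and P = 2g + 1/α. Then for every integer m, it is not the case that 0 ≤ D + mP ≤ K. -/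
/-!
Writing `u = (r - α)/(2α) ∈ [-1, 0]`, the progression `D + mP` jumps over the whole interval
`[0, K]` between `m = -1` and `m = 0`: `D - P = u - 1/α < 0` while `D = 2g + u ≥ 2g - 1 > K`.
Since `P > 0`, all terms with `m ≥ 0` lie above `K` and all terms with `m ≤ -1` below `0`.
-/

theorem add_int_mul_notMem_Icc {R : Type*} [CommRing R] [LinearOrder R] [IsStrictOrderedRing R]
    {x p a b : R} (hp : 0 ≤ p) (hlow : x - p < a) (hhigh : b < x) (m : ℤ) :
    x + m * p ∉ Set.Icc a b := by
  rintro ⟨ha, hb⟩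
  rcases le_or_gt 0 m with hm | hm
  · have : 0 ≤ (m : R) * p := mul_nonneg (by exact_mod_cast hm) hp
    linarith
  · have hm' : (m : R) ≤ -1 := by exact_mod_cast Int.le_sub_one_of_lt hm
    have : (m : R) * p ≤ -1 * p := mul_le_mul_of_nonneg_right hm' hp
    linarith

theorem sub_div_two_mul_mem_Icc {K : Type*} [Field K] [LinearOrder K] [IsStrictOrderedRing K]
    {a r : K} (ha : 0 < a) (h₁ : -a ≤ r) (h₂ : r ≤ a) :
    (r - a) / (2 * a) ∈ Set.Icc (-1) 0 := by
  constructor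
  · rw [le_div_iff₀ (by positivity)]
    linarith
  · exact div_nonpos_of_nonpos_of_nonneg (by linarith) (by positivity)

/-- For integers `g ≥ 1`, `α ≥ 1` and `−α ≤ r ≤ α`, setting (in `ℚ`)
`D = 2g + (r−α)/(2α)`, `K = 2g − 1 − 1/α` and `P = 2g + 1/α`, for every integer `m`
it is not the case that `0 ≤ D + m·P ≤ K`. -/
theorem stmt_5 (g α r : ℤ) (hg : 1 ≤ g) (hα : 1 ≤ α) (hr1 : -α ≤ r) (hr2 : r ≤ α)
    (D K P : ℚ)
    (hD : D = 2 * (g : ℚ) + ((r : ℚ) - (α : ℚ)) / (2 * (α : ℚ)))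
    (hK : K = 2 * (g : ℚ) - 1 - 1 / (α : ℚ))
    (hP : P = 2 * (g : ℚ) + 1 / (α : ℚ)) :
    ∀ m : ℤ, ¬ (0 ≤ D + (m : ℚ) * P ∧ D + (m : ℚ) * P ≤ K) := by
  subst hD hK hP
  have hαQ : (0 : ℚ) < α := by exact_mod_cast hα
  have hgQ : (1 : ℚ) ≤ g := by exact_mod_cast hg
  have hinv : (0 : ℚ) < 1 / α := by positivity
  obtain ⟨hu₁, hu₂⟩ := sub_div_two_mul_mem_Icc hαQ
    (by exact_mod_cast hr1 : -(α : ℚ) ≤ r) (by exact_mod_cast hr2 : (r : ℚ) ≤ α)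
  exact add_int_mul_notMem_Icc (by linarith) (by linarith) (by linarith)
end

section
/- Let q ≥ 3 be an integer. In the free abelian group ℤ^{1+2q} with basis h, e_1, …, e_{2q}, equipped with the symmetric bilinear form Q determined by Q(h,h) = 1, Q(e_i,e_i) = −1 for all i, and all other pairings of distinct basis vectors equal to 0, let H_q be the subgroup generated by the 2q elements e_1 − e_2, e_2 − e_3, …, e_{2q−1} − e_{2q} and h − e_1 − e_2 − ⋯ − e_q, and let Q_q be the restriction of Q to H_q. Then for every positive integer m there is no injective homomorphism of abelian groups φ : H_q → ℤ^m such that Q_q(x, y) = −⟨φ(x), φ(y)⟩ for all x, y ∈ H_q, where ⟨·,·⟩ is the standard inner product on ℤ^m; that is, the lattice Λ_q = (H_q, Q_q) admits no embedding into the negative diagonal lattice D_m = (ℤ^m, −Id). -/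
/-- The basis vector `h` of `ℤ^{1+2q}` (index `0`). -/
def latticeH (q : ℕ) : Fin (2 * q + 1) → ℤ := Pi.single 0 1

/-- The basis vectors `e_1, …, e_{2q}` of `ℤ^{1+2q}` (indices `1, …, 2q`). -/
def latticeE (q : ℕ) (i : Fin (2 * q)) : Fin (2 * q + 1) → ℤ := Pi.single i.succ 1

/-- The symmetric bilinear form `Q` on `ℤ^{1+2q}` with `Q(h,h) = 1`,
`Q(e_i,e_i) = −1`, and all other pairings of distinct basis vectors zero. -/
def latticeQ (q : ℕ) (x y : Fin (2 * q + 1) → ℤ) : ℤ :=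
  x 0 * y 0 - ∑ i : Fin (2 * q), x i.succ * y i.succ

/-- The set of the `2q` generators `e_1 − e_2, …, e_{2q−1} − e_{2q}` and
`h − e_1 − e_2 − ⋯ − e_q` of the subgroup `H_q`. -/
def latticeGens (q : ℕ) : Set (Fin (2 * q + 1) → ℤ) :=
  {v | ∃ (j : ℕ) (h1 : j < 2 * q) (h2 : j + 1 < 2 * q),
      v = latticeE q ⟨j, h1⟩ - latticeE q ⟨j + 1, h2⟩} ∪
  {latticeH q - ∑ i : Fin (2 * q), if (i : ℕ) < q then latticeE q i else 0}

/-- The subgroup `H_q` of `ℤ^{1+2q}` generated by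
`e_1 − e_2, …, e_{2q−1} − e_{2q}` and `h − e_1 − ⋯ − e_q`. -/
def latticeSubgroup (q : ℕ) : AddSubgroup (Fin (2 * q + 1) → ℤ) :=
  AddSubgroup.closure (latticeGens q)

/-!
A norm-`2` vector of `ℤ^m` has the form `±f_a ± f_b`. If `2q - 1 ≥ 4` such vectors pairwise have
inner product `1`, the supports form a star rather than a triangle, so they share a coordinate with
a common sign: the images `p_i` of `e_1 - e_{i+1}` are `f - ρ_i` for an integral unit vector `f`,
and the `ρ_i` together with `ρ_0 = f` are orthonormal. Bessel's inequality for the image `U` of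
`h - e_1 - ⋯ - e_q` then gives `q - 1 = ‖U‖² ≥ q (c² + (c + 1)²) ≥ q` with `c = ⟨U, f⟩ ∈ ℤ`.
-/

open Matrix Finset

section OrderedRing

variable {R ι : Type*} [CommRing R] [LinearOrder R] [IsStrictOrderedRing R] [Fintype ι]

theorem mul_self_le_dotProduct_self (v : ι → R) (a : ι) : v a * v a ≤ v ⬝ᵥ v :=
  single_le_sum (f := fun c => v c * v c) (fun c _ => mul_self_nonneg (v c)) (mem_univ a)

theorem sum_sq_dotProduct_le_of_orthonormal {κ : Type*} [Fintype κ] [DecidableEq κ]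
    (ρ : κ → ι → R) (hρ : ∀ i j, ρ i ⬝ᵥ ρ j = if i = j then 1 else 0) (x : ι → R) :
    ∑ i, (x ⬝ᵥ ρ i) ^ 2 ≤ x ⬝ᵥ x := by
  obtain ⟨y, hy⟩ : ∃ y, y = ∑ i, (x ⬝ᵥ ρ i) • ρ i := ⟨_, rfl⟩
  have hyρ : ∀ j, y ⬝ᵥ ρ j = x ⬝ᵥ ρ j := fun j => by
    simp [hy, sum_dotProduct, smul_dotProduct, hρ]
  have hxy : x ⬝ᵥ y = ∑ i, (x ⬝ᵥ ρ i) ^ 2 := by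
    simp [hy, dotProduct_sum, dotProduct_smul, sq]
  have hyy : y ⬝ᵥ y = ∑ i, (x ⬝ᵥ ρ i) ^ 2 := by
    nth_rw 2 [hy]
    simp [dotProduct_sum, dotProduct_smul, hyρ, sq]
  have h0 : 0 ≤ (x - y) ⬝ᵥ (x - y) := sum_nonneg fun c _ => mul_self_nonneg _
  rw [sub_dotProduct, dotProduct_sub, dotProduct_sub, dotProduct_comm y x, hxy, hyy] at h0
  linarith

end OrderedRing

section IntVectors

variable {ι : Type*} [Fintype ι] {u v : ι → ℤ}

theorem abs_apply_le_one_of_dotProduct_self_eq_two (hv : v ⬝ᵥ v = 2) (a : ι) : |v a| ≤ 1 := by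
  have := mul_self_le_dotProduct_self v a
  rw [abs_le]; constructor <;> nlinarith

theorem exists_ne_apply_ne_zero_of_dotProduct_self_eq_two (hv : v ⬝ᵥ v = 2) (a : ι) :
    ∃ c ≠ a, v c ≠ 0 := by
  by_contra! h
  have hva : v a * v a = 2 := by
    rw [← hv, dotProduct, sum_eq_single a (fun c _ hc => by simp [h c hc]) (by simp)]
  have := abs_le.mp (abs_apply_le_one_of_dotProduct_self_eq_two hv a)
  nlinarith

variable [DecidableEq ι]

theorem eq_single_add_single_of_dotProduct_self_eq_two (hv : v ⬝ᵥ v = 2) {a c : ι} (hac : a ≠ c)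
    (ha : v a ≠ 0) (hc : v c ≠ 0) : v = Pi.single a (v a) + Pi.single c (v c) := by
  funext b
  by_cases hba : b = a
  · subst hba; simp [hac]
  by_cases hbc : b = c
  · subst hbc; simp [hba]
  simp only [Pi.add_apply, Pi.single_apply, hba, hbc, if_false, add_zero]
  by_contra hb
  have hsub : ∑ x ∈ {a, b, c}, v x * v x ≤ v ⬝ᵥ v :=
    sum_le_univ_sum_of_nonneg fun x => mul_self_nonneg (v x)
  rw [sum_insert (by simp [Ne.symm hba, hac]), sum_pair hbc, hv] at hsub
  have h1 := Int.one_le_abs ha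
  have h2 := Int.one_le_abs hb
  have h3 := Int.one_le_abs hc
  nlinarith [abs_mul_abs_self (v a), abs_mul_abs_self (v b), abs_mul_abs_self (v c)]

theorem eq_single_add_sub_single_of_dotProduct_eq_one (hu : u ⬝ᵥ u = 2) (hv : v ⬝ᵥ v = 2) {a b : ι}
    (hua : u a ≠ 0) (hub : u b = 0) (hva : v a = 0) (hvb : v b ≠ 0) (huv : u ⬝ᵥ v = 1) :
    u = Pi.single a (u a) + (v - Pi.single b (v b)) := by
  obtain ⟨c, hcb, hvc⟩ := exists_ne_apply_ne_zero_of_dotProduct_self_eq_two hv b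
  have hv' := eq_single_add_single_of_dotProduct_self_eq_two hv (Ne.symm hcb) hvb hvc
  have huvc : u c * v c = 1 := by
    rw [hv', dotProduct_add, dotProduct_single, dotProduct_single, hub] at huv
    simpa using huv
  have hac : a ≠ c := by rintro rfl; exact hvc hva
  have huc : u c = v c := by
    rcases Int.eq_one_or_neg_one_of_mul_eq_one' huvc with h | h <;> rw [h.1, h.2]
  have hu' := eq_single_add_single_of_dotProduct_self_eq_two hu hac hua (by rw [huc]; exact hvc)
  nth_rw 1 [hu', hv']
  simp [huc]

theorem eq_of_dotProduct_eq_one {u' : ι → ℤ} (hu : u ⬝ᵥ u = 2) (hu' : u' ⬝ᵥ u' = 2)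
    (hv : v ⬝ᵥ v = 2) {a b : ι} (hua : u a ≠ 0) (hu'a : u' a = u a) (hub : u b = 0)
    (hu'b : u' b = 0) (hva : v a = 0) (hvb : v b ≠ 0) (huv : u ⬝ᵥ v = 1)
    (hu'v : u' ⬝ᵥ v = 1) : u = u' := by
  rw [eq_single_add_sub_single_of_dotProduct_eq_one hu hv hua hub hva hvb huv,
    eq_single_add_sub_single_of_dotProduct_eq_one hu' hv (hu'a ▸ hua) hu'b hva hvb hu'v, hu'a]

variable {κ : Type*} [DecidableEq κ]

theorem forall_apply_eq_or_forall_apply_eq {p : κ → ι → ℤ} {s : Finset κ} (hs : 2 < #s)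
    (hp : ∀ i ∈ s, ∀ j ∈ s, p i ⬝ᵥ p j = if i = j then 2 else 1) {a b : ι} {ε δ : ℤ}
    (hε : ε ≠ 0) (hδ : δ ≠ 0)
    (hbranch : ∀ i ∈ s, (p i a = ε ∧ p i b = 0) ∨ (p i a = 0 ∧ p i b = δ)) :
    (∀ i ∈ s, p i a = ε) ∨ (∀ i ∈ s, p i b = δ) := by
  have hnorm : ∀ i ∈ s, p i ⬝ᵥ p i = 2 := fun i hi => by simpa using hp i hi i hi
  have hpair : ∀ i ∈ s, ∀ j ∈ s, i ≠ j → p i ⬝ᵥ p j = 1 := fun i hi j hj hij => by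
    simpa [hij] using hp i hi j hj
  by_contra! ⟨⟨j, hj, hja⟩, ⟨k, hk, hkb⟩⟩
  have hjb : p j a = 0 ∧ p j b = δ := by grind
  have hka : p k a = ε ∧ p k b = 0 := by grind
  have hkj : k ≠ j := fun h => hε (by rw [← hka.1, h, hjb.1])
  obtain ⟨l, hl, hl'⟩ := exists_mem_notMem_of_card_lt_card
    (lt_of_le_of_lt (card_le_two (a := j) (b := k)) hs)
  simp only [mem_insert, mem_singleton, not_or] at hl'
  -- `p l` shares its branch with `p k` or `p j`, and a vector of the other branch pins it down
  rcases hbranch l hl with hla | hla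
  · have := hpair k hk l hl (Ne.symm hl'.2)
    rw [eq_of_dotProduct_eq_one (hnorm k hk) (hnorm l hl) (hnorm j hj) (hka.1 ▸ hε)
      (hla.1.trans hka.1.symm) hka.2 hla.2 hjb.1 (hjb.2 ▸ hδ) (hpair k hk j hj hkj)
      (hpair l hl j hj hl'.1), hnorm l hl] at this
    omega
  · have := hpair j hj l hl (Ne.symm hl'.1)
    rw [eq_of_dotProduct_eq_one (hnorm j hj) (hnorm l hl) (hnorm k hk) (hjb.2 ▸ hδ)
      (hla.2.trans hjb.2.symm) hjb.1 hla.1 hka.2 (hka.1 ▸ hε) (hpair j hj k hk (Ne.symm hkj))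
      (hpair l hl k hk hl'.2), hnorm l hl] at this
    omega

theorem exists_unit_dotProduct_eq_one (p : κ → ι → ℤ) (s : Finset κ) (hs : 3 < #s)
    (hp : ∀ i ∈ s, ∀ j ∈ s, p i ⬝ᵥ p j = if i = j then 2 else 1) :
    ∃ f : ι → ℤ, f ⬝ᵥ f = 1 ∧ ∀ i ∈ s, f ⬝ᵥ p i = 1 := by
  have hnorm : ∀ i ∈ s, p i ⬝ᵥ p i = 2 := fun i hi => by simpa using hp i hi i hi
  obtain ⟨i₁, hi₁⟩ := card_pos.mp (by omega : 0 < #s)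
  obtain ⟨a, ha⟩ : ∃ a, p i₁ a ≠ 0 :=
    Function.ne_iff.mp fun h => by simpa [h] using hnorm i₁ hi₁
  obtain ⟨b, hba, hb⟩ := exists_ne_apply_ne_zero_of_dotProduct_self_eq_two (hnorm i₁ hi₁) a
  have hp₁ := eq_single_add_single_of_dotProduct_self_eq_two (hnorm i₁ hi₁) (Ne.symm hba) ha hb
  have hval : ∀ i ∈ s, ∀ c, -1 ≤ p i c ∧ p i c ≤ 1 := fun i hi c =>
    abs_le.mp (abs_apply_le_one_of_dotProduct_self_eq_two (hnorm i hi) c)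
  have hunit : ∀ c, p i₁ c ≠ 0 → (∀ i ∈ s.erase i₁, p i c = p i₁ c) →
      ∃ f : ι → ℤ, f ⬝ᵥ f = 1 ∧ ∀ i ∈ s, f ⬝ᵥ p i = 1 := by
    intro c hc hsame
    have hic : ∀ i ∈ s, p i c = p i₁ c := fun i hi => by
      by_cases h : i = i₁
      · rw [h]
      · exact hsame i (mem_erase.mpr ⟨h, hi⟩)
    rcases (by have := hval i₁ hi₁ c; omega : p i₁ c = 1 ∨ p i₁ c = -1) with h | h <;>
      exact ⟨Pi.single c (p i₁ c), by simp [h],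
        fun i hi => by simp [single_dotProduct, hic i hi, h]⟩
  refine (forall_apply_eq_or_forall_apply_eq (s := s.erase i₁)
    (by rw [card_erase_of_mem hi₁]; omega)
    (fun i hi j hj => hp i (mem_of_mem_erase hi) j (mem_of_mem_erase hj)) ha hb
    (fun i hi => ?_)).elim (hunit a ha) (hunit b hb)
  have h := hp i₁ hi₁ i (mem_of_mem_erase hi)
  rw [if_neg (Ne.symm (ne_of_mem_erase hi)), hp₁, add_dotProduct, single_dotProduct,
    single_dotProduct] at h
  have := hval i (mem_of_mem_erase hi) a
  have := hval i (mem_of_mem_erase hi) b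
  have := hval i₁ hi₁ a
  have := hval i₁ hi₁ b
  rcases (by omega : p i₁ a = 1 ∨ p i₁ a = -1) with hε | hε <;>
    rcases (by omega : p i₁ b = 1 ∨ p i₁ b = -1) with hδ | hδ <;>
    rw [hε, hδ] at h ⊢ <;> omega

theorem exists_orthonormal_eq_sub_of_gram [Fintype κ]
    (hκ : 4 < Fintype.card κ) (i₀ : κ) (p : κ → ι → ℤ)
    (hp : ∀ i j, p i ⬝ᵥ p j =
      (if i = j then 1 else 0) + 1 - (if i = i₀ then 1 else 0) - (if j = i₀ then 1 else 0)) :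
    ∃ ρ : κ → ι → ℤ, (∀ i j, ρ i ⬝ᵥ ρ j = if i = j then 1 else 0) ∧ ∀ i, p i = ρ i₀ - ρ i := by
  have hp₀ : p i₀ = 0 := by rw [← dotProduct_self_eq_zero, hp]; simp
  obtain ⟨f, hff, hfp⟩ := exists_unit_dotProduct_eq_one p (univ.erase i₀)
    (by rw [card_erase_of_mem (mem_univ _), card_univ]; omega)
    (fun i hi j hj => by
      rw [hp, if_neg (mem_erase.mp hi).1, if_neg (mem_erase.mp hj).1]; split_ifs <;> rfl)
  have hf : ∀ i, f ⬝ᵥ p i = if i = i₀ then 0 else 1 := fun i => by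
    split_ifs with h
    · simp [h, hp₀]
    · exact hfp i (mem_erase.mpr ⟨h, mem_univ i⟩)
  refine ⟨fun i => f - p i, fun i j => ?_, fun i => by simp [hp₀]⟩
  simp only [sub_dotProduct, dotProduct_sub, hff, hf, dotProduct_comm (p i) f, hp]
  split_ifs <;> simp_all

end IntVectors

section Lattice

variable (q : ℕ)

def latticeW : Fin (2 * q + 1) → ℤ :=
  latticeH q - ∑ i : Fin (2 * q), if (i : ℕ) < q then latticeE q i else 0

theorem latticeW_mem : latticeW q ∈ latticeSubgroup q :=
  AddSubgroup.subset_closure (Or.inr rfl)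

theorem latticeE_sub_latticeE_mem (i j : Fin (2 * q)) :
    latticeE q i - latticeE q j ∈ latticeSubgroup q := by
  have h₀ : ∀ n (hn : n < 2 * q),
      latticeE q ⟨0, by omega⟩ - latticeE q ⟨n, hn⟩ ∈ latticeSubgroup q := by
    intro n
    induction n with
    | zero => simp
    | succ n ih =>
      intro hn
      simpa using add_mem (ih (by omega))
        (AddSubgroup.subset_closure (Or.inl ⟨n, by omega, hn, rfl⟩))
  simpa using sub_mem (h₀ j j.2) (h₀ i i.2)

theorem sum_ite_val_lt {R : Type*} [NonAssocSemiring R] (x y : R) :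
    ∑ i : Fin (2 * q), (if (i : ℕ) < q then x else y) = q * x + q * y := by
  have hlt : #{i : Fin (2 * q) | (i : ℕ) < q} = q := by simp [Fin.card_filter_val_lt]; omega
  have hge : #{i : Fin (2 * q) | ¬(i : ℕ) < q} = q := by
    have := card_filter_add_card_filter_not (s := univ) (fun i : Fin (2 * q) => (i : ℕ) < q)
    simp only [card_univ, Fintype.card_fin, hlt] at this
    omega
  rw [sum_ite, sum_const, sum_const, hlt, hge, nsmul_eq_mul, nsmul_eq_mul]

variable {q}

theorem latticeQ_comm (x y : Fin (2 * q + 1) → ℤ) : latticeQ q x y = latticeQ q y x := by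
  simp only [latticeQ, mul_comm]

theorem latticeQ_sub_left (x x' y : Fin (2 * q + 1) → ℤ) :
    latticeQ q (x - x') y = latticeQ q x y - latticeQ q x' y := by
  simp only [latticeQ, Pi.sub_apply, sub_mul, sum_sub_distrib]; ring

theorem latticeQ_latticeE_left (i : Fin (2 * q)) (y : Fin (2 * q + 1) → ℤ) :
    latticeQ q (latticeE q i) y = -y i.succ := by
  simp [latticeQ, latticeE, Pi.single_apply, Fin.succ_ne_zero]

theorem latticeW_apply_zero : latticeW q 0 = 1 := by
  simp [latticeW, latticeH, latticeE, ite_apply, Fin.succ_ne_zero]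

theorem latticeE_apply_succ (i j : Fin (2 * q)) :
    latticeE q i j.succ = if j = i then 1 else 0 := by
  simp [latticeE, Pi.single_apply]

theorem latticeW_apply_succ (j : Fin (2 * q)) :
    latticeW q j.succ = if (j : ℕ) < q then -1 else 0 := by
  simp only [latticeW, latticeH, Pi.sub_apply, Pi.single_apply, Fin.succ_ne_zero, if_false,
    Finset.sum_apply, apply_ite (fun v : Fin (2 * q + 1) → ℤ => v j.succ), Pi.zero_apply,
    latticeE_apply_succ, zero_sub]
  rw [sum_eq_single j (fun i _ hij => by simp [Ne.symm hij]) (by simp)]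
  split_ifs <;> simp_all

theorem latticeQ_sub_sub (i j k l : Fin (2 * q)) :
    latticeQ q (latticeE q i - latticeE q j) (latticeE q k - latticeE q l) =
      (if i = l then 1 else 0) + (if j = k then 1 else 0) - (if i = k then 1 else 0) -
        (if j = l then 1 else 0) := by
  simp only [latticeQ_sub_left, latticeQ_latticeE_left, Pi.sub_apply, latticeE_apply_succ]
  ring

theorem latticeQ_latticeW_sub (i j : Fin (2 * q)) :
    latticeQ q (latticeW q) (latticeE q i - latticeE q j) =
      (if (i : ℕ) < q then 1 else 0) - (if (j : ℕ) < q then 1 else 0) := by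
  rw [latticeQ_comm]
  simp only [latticeQ_sub_left, latticeQ_latticeE_left, latticeW_apply_succ]
  split_ifs <;> ring

theorem latticeQ_latticeW_self : latticeQ q (latticeW q) (latticeW q) = 1 - q := by
  have hsq : ∀ t : Fin (2 * q), latticeW q t.succ * latticeW q t.succ =
      if (t : ℕ) < q then 1 else 0 := fun t => by
    rw [latticeW_apply_succ]; split_ifs <;> norm_num
  simp only [latticeQ, latticeW_apply_zero, hsq, sum_ite_val_lt]
  ring

end Lattice

theorem stmt_8_general (q : ℕ) (hq : 3 ≤ q) (m : ℕ) :
    ¬ ∃ φ : latticeSubgroup q →+ (Fin m → ℤ),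
        Function.Injective φ ∧
        ∀ x y : latticeSubgroup q,
          latticeQ q (x : Fin (2 * q + 1) → ℤ) (y : Fin (2 * q + 1) → ℤ) =
            -(∑ j : Fin m, φ x j * φ y j) := by
  rintro ⟨φ, -, hQ⟩
  have hφ : ∀ x y, φ x ⬝ᵥ φ y = -latticeQ q x y := fun x y => by rw [hQ, neg_neg]; rfl
  set i₀ : Fin (2 * q) := ⟨0, by omega⟩
  set p : Fin (2 * q) → Fin m → ℤ :=
    fun i => φ ⟨latticeE q i₀ - latticeE q i, latticeE_sub_latticeE_mem q i₀ i⟩ with hp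
  set U := φ ⟨latticeW q, latticeW_mem q⟩ with hU
  obtain ⟨ρ, hρ, hpρ⟩ := exists_orthonormal_eq_sub_of_gram (by simp; omega) i₀ p
    (fun i j => by rw [hp, hφ, latticeQ_sub_sub]; simp only [eq_comm (a := i₀), if_true]; ring)
  obtain ⟨c, hc⟩ : ∃ c, U ⬝ᵥ ρ i₀ = c := ⟨_, rfl⟩
  have hUρ : ∀ i, U ⬝ᵥ ρ i = if (i : ℕ) < q then c else c + 1 := by
    intro i
    have h := hφ ⟨latticeW q, latticeW_mem q⟩
      ⟨latticeE q i₀ - latticeE q i, latticeE_sub_latticeE_mem q i₀ i⟩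
    change U ⬝ᵥ p i = _ at h
    rw [latticeQ_latticeW_sub, if_pos (show (i₀ : ℕ) < q by simp [i₀]; omega), hpρ,
      dotProduct_sub, hc] at h
    split_ifs at h ⊢ <;> linarith
  have hUU : U ⬝ᵥ U = q - 1 := by rw [hU, hφ, latticeQ_latticeW_self]; ring
  have hbessel := sum_sq_dotProduct_le_of_orthonormal ρ hρ U
  simp only [hUρ, apply_ite (· ^ 2), sum_ite_val_lt, hUU] at hbessel
  have hc₁ : 0 ≤ c * (c + 1) := by rcases le_or_gt 0 c with h | h <;> nlinarith
  nlinarith [mul_nonneg (Int.natCast_nonneg q) hc₁]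

/-- For `q ≥ 3`, the lattice `Λ_q = (H_q, Q_q)` admits no embedding into the
negative diagonal lattice `D_m = (ℤ^m, −Id)` for any positive integer `m`: there
is no injective homomorphism `φ : H_q → ℤ^m` with
`Q(x, y) = −⟨φ(x), φ(y)⟩` for all `x, y ∈ H_q`. -/
theorem stmt_8 (q : ℕ) (hq : 3 ≤ q) (m : ℕ) (hm : 0 < m) :
    ¬ ∃ φ : latticeSubgroup q →+ (Fin m → ℤ),
        Function.Injective φ ∧
        ∀ x y : latticeSubgroup q,
          latticeQ q (x : Fin (2 * q + 1) → ℤ) (y : Fin (2 * q + 1) → ℤ) =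
            -(∑ j : Fin m, φ x j * φ y j) :=
  stmt_8_general q hq m
end
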